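/- (Proposition 3.9) Suppose a discrete form Ω : ℤ⁴ → Cl satisfies equation (3.17): −DΩ = mΩe. For signs ε, s, t ∈ {1, −1} put X_{ε,s,t} := Ω P_{εe} P_{s0} P_{t12}, where P_{εe} = ½(1+ε·ie), P_{s0} = ½(1+s·e₀), P_{t12} = ½(1+t·ie₁e₂). Then Ω equals the sum of the eight parts X_{ε,s,t}, and each part satisfies the discrete Hestenes equation with sign −εst: −(D X_{ε,s,t})e₁e₂ = (−εst)·m·X_{ε,s,t} e₀. In particular the parts with (ε,s,t) ∈ {(−1,1,1), (1,−1,1), (1,1,−1), (−1,−1,−1)} satisfy the discrete Hestenes equation −(DX)e₁e₂ = mXe₀, while the other four parts satisfy it with the sign of the right-hand side reversed. -/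

import Mathlib

noncomputable section

/-- The Minkowski quadratic form `Q v = v₀² − v₁² − v₂² − v₃²` on `ℂ⁴`. -/
def Q : QuadraticForm ℂ (Fin 4 → ℂ) :=
  QuadraticMap.weightedSumSquares ℂ ![(1 : ℂ), -1, -1, -1]

/-- The Clifford algebra of spacetime over `ℂ`. -/
abbrev Cl : Type := CliffordAlgebra Q

/-- The generators `e_μ`, images of the standard basis vectors. -/
def e (μ : Fin 4) : Cl := CliffordAlgebra.ι Q (Pi.single μ 1)

/-- The volume element `e = e₀e₁e₂e₃`. -/
def eV : Cl := e 0 * e 1 * e 2 * e 3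

/-- The difference operator `(Δ_μ Ω)(k) = Ω(k + 1_μ) − Ω(k)`. -/
def Δ (μ : Fin 4) (Ω : (Fin 4 → ℤ) → Cl) : (Fin 4 → ℤ) → Cl :=
  fun k => Ω (k + Pi.single μ 1) - Ω k

/-- The discrete Dirac operator `DΩ = Σ_μ e_μ · (Δ_μ Ω)`. -/
def Dirac (Ω : (Fin 4 → ℤ) → Cl) : (Fin 4 → ℤ) → Cl :=
  fun k => ∑ μ : Fin 4, e μ * Δ μ Ω k

/-- The projectors `P_{εe} = ½(1 + ε i e)` for `ε = ±1`. -/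
def Pe (ε : ℂ) : Cl := (2⁻¹ : ℂ) • (1 + (ε * Complex.I) • eV)

/-- The projectors `P_{s0} = ½(1 + s e₀)` for `s = ±1`. -/
def P0 (s : ℂ) : Cl := (2⁻¹ : ℂ) • (1 + s • e 0)

/-- The projectors `P_{t12} = ½(1 + t i e₁e₂)` for `t = ±1`. -/
def P12 (t : ℂ) : Cl := (2⁻¹ : ℂ) • (1 + (t * Complex.I) • (e 1 * e 2))

/-!
Multiplying a form on the right by a constant commutes with the difference operators, so
`D (Ω P) = (D Ω) P = -m Ω e P` for every product `P` of projectors, and the claim reduces to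
the Clifford identity `e P e₁e₂ = -εst P e₀` for `P = P_{εe} P_{s0} P_{t12}`. Since
`(ie)² = (ie₁e₂)² = e₀² = 1`, each factor of `P` absorbs the element defining it:
`e P_{εe} = -iε P_{εe}`, `P_{t12} e₁e₂ = -it P_{t12}`, and `P_{s0} e₀ = s P_{s0}` (the
latter after commuting `e₀` past `P_{t12}`). Comparing the scalars `(-iε)(-it) = -εt = -εst · s`
gives the identity.
-/

open Complex

section Idempotents

variable {A : Type*} [Ring A] [Algebra ℂ A]

lemma mul_half_one_add_I_smul {a : A} (ha : a * a = -1) {c : ℂ} (hc : c ^ 2 = 1) :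
    a * (2⁻¹ : ℂ) • (1 + (c * I) • a) = -(c * I) • (2⁻¹ : ℂ) • (1 + (c * I) • a) := by
  rw [mul_smul_comm, mul_add, mul_one, mul_smul_comm, ha]
  linear_combination (norm := module) (-2⁻¹ : ℂ) • hc • a + (c ^ 2 * 2⁻¹ : ℂ) • I_sq • a

lemma half_one_add_I_smul_mul {a : A} (ha : a * a = -1) {c : ℂ} (hc : c ^ 2 = 1) :
    (2⁻¹ : ℂ) • (1 + (c * I) • a) * a = -(c * I) • (2⁻¹ : ℂ) • (1 + (c * I) • a) := by
  rw [smul_mul_assoc, add_mul, one_mul, smul_mul_assoc, ha]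
  linear_combination (norm := module) (-2⁻¹ : ℂ) • hc • a + (c ^ 2 * 2⁻¹ : ℂ) • I_sq • a

lemma half_one_add_smul_mul {a : A} (ha : a * a = 1) {c : ℂ} (hc : c ^ 2 = 1) :
    (2⁻¹ : ℂ) • (1 + c • a) * a = c • (2⁻¹ : ℂ) • (1 + c • a) := by
  rw [smul_mul_assoc, add_mul, one_mul, smul_mul_assoc, ha]
  linear_combination (norm := module) (-2⁻¹ : ℂ) • hc • a

lemma half_one_add_smul_add_half_one_add_neg_smul (a : A) (c : ℂ) :
    (2⁻¹ : ℂ) • (1 + c • a) + (2⁻¹ : ℂ) • (1 + (-c) • a) = 1 := by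
  module

end Idempotents

section Generators

lemma Q_single (μ : Fin 4) : Q (Pi.single μ 1) = ![(1 : ℂ), -1, -1, -1] μ := by
  rw [Q, QuadraticMap.weightedSumSquares_apply]
  fin_cases μ <;> simp [Pi.single_apply]

lemma polar_Q_single_of_ne {μ ν : Fin 4} (h : μ ≠ ν) :
    QuadraticMap.polar Q (Pi.single μ (1 : ℂ)) (Pi.single ν 1) = 0 := by
  simp only [QuadraticMap.polar, Q, QuadraticMap.weightedSumSquares_apply]
  fin_cases μ <;> fin_cases ν <;> simp_all [Fin.sum_univ_four, Pi.single_apply]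

lemma e_mul_self (μ : Fin 4) : e μ * e μ = ![(1 : ℂ), -1, -1, -1] μ • 1 := by
  rw [e, CliffordAlgebra.ι_sq_scalar, Q_single, Algebra.algebraMap_eq_smul_one]

lemma e_mul_e_of_ne {μ ν : Fin 4} (h : μ ≠ ν) : e μ * e ν = -(e ν * e μ) :=
  eq_neg_of_add_eq_zero_left <| by
    rw [e, e, CliffordAlgebra.ι_mul_ι_add_swap, polar_Q_single_of_ne h, map_zero]

lemma e_mul_e_of_lt {μ ν : Fin 4} (h : ν < μ) : e μ * e ν = -(e ν * e μ) :=
  e_mul_e_of_ne h.ne'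

lemma e_mul_e_mul_of_lt {μ ν : Fin 4} (h : ν < μ) (x : Cl) :
    e μ * (e ν * x) = -(e ν * (e μ * x)) := by
  rw [← mul_assoc, e_mul_e_of_lt h, neg_mul, mul_assoc]

lemma eV_mul_eV : eV * eV = -1 := by
  simp [eV, mul_assoc, e_mul_self, e_mul_e_mul_of_lt]

lemma e12_mul_e12 : (e 1 * e 2) * (e 1 * e 2) = -1 := by
  simp [mul_assoc, e_mul_self, e_mul_e_mul_of_lt]

lemma commute_e0_e12 : Commute (e 0) (e 1 * e 2) := by
  simp [Commute, SemiconjBy, mul_assoc, e_mul_e_mul_of_lt, e_mul_e_of_lt]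

end Generators

section Projectors

variable {ε s t : ℂ}

lemma eV_mul_Pe (hε : ε ^ 2 = 1) : eV * Pe ε = -(ε * I) • Pe ε :=
  mul_half_one_add_I_smul eV_mul_eV hε

lemma P12_mul_e12 (ht : t ^ 2 = 1) : P12 t * (e 1 * e 2) = -(t * I) • P12 t :=
  half_one_add_I_smul_mul e12_mul_e12 ht

lemma P0_mul_e0 (hs : s ^ 2 = 1) : P0 s * e 0 = s • P0 s :=
  half_one_add_smul_mul (by simpa using e_mul_self 0) hs

lemma commute_e0_P12 : Commute (e 0) (P12 t) :=
  ((Commute.one_right _).add_right (commute_e0_e12.smul_right _)).smul_right _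

lemma eV_mul_projectors_mul_e12 (hε : ε ^ 2 = 1) (hs : s ^ 2 = 1) (ht : t ^ 2 = 1) :
    eV * (Pe ε * P0 s * P12 t) * (e 1 * e 2) =
      -(ε * s * t) • (Pe ε * P0 s * P12 t * e 0) := by
  have hP0 : Pe ε * P0 s * P12 t * e 0 = s • (Pe ε * P0 s * P12 t) := by
    rw [mul_assoc _ (P12 t), ← commute_e0_P12.eq, ← mul_assoc, mul_assoc (Pe ε), P0_mul_e0 hs,
      mul_smul_comm, smul_mul_assoc]
  calc eV * (Pe ε * P0 s * P12 t) * (e 1 * e 2)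
      = (eV * Pe ε) * P0 s * (P12 t * (e 1 * e 2)) := by simp only [mul_assoc]
    _ = ((t * I) * (ε * I)) • (Pe ε * P0 s * P12 t) := by
      rw [eV_mul_Pe hε, P12_mul_e12 ht]
      simp only [smul_mul_assoc, mul_smul_comm, smul_smul, neg_mul_neg]
    _ = -(ε * s * t) • (Pe ε * P0 s * P12 t * e 0) := by
      rw [hP0, smul_smul]
      congr 1
      linear_combination (ε * t) * I_sq + ε * t * hs

end Projectors

lemma Dirac_mul_right (Ω : (Fin 4 → ℤ) → Cl) (C : Cl) (k : Fin 4 → ℤ) :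
    Dirac (fun k => Ω k * C) k = Dirac Ω k * C := by
  simp only [Dirac, Δ, Finset.sum_mul, sub_mul, mul_assoc]

/-- Proposition 3.9: a solution `Ω` of `−DΩ = mΩe` decomposes into the eight
parts `X_{ε,s,t} = Ω P_{εe} P_{s0} P_{t12}`, each satisfying the discrete
Hestenes equation with sign `−εst`: `−(D X_{ε,s,t})e₁e₂ = (−εst) m X_{ε,s,t} e₀`. -/
theorem stmt_16 (m : ℝ) (Ω : (Fin 4 → ℤ) → Cl)
    (hΩ : ∀ k, -(Dirac Ω k) = (m : ℂ) • (Ω k * eV)) :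
    (∀ k, Ω k =
        Ω k * Pe 1 * P0 1 * P12 1 + Ω k * Pe 1 * P0 1 * P12 (-1)
      + Ω k * Pe 1 * P0 (-1) * P12 1 + Ω k * Pe 1 * P0 (-1) * P12 (-1)
      + Ω k * Pe (-1) * P0 1 * P12 1 + Ω k * Pe (-1) * P0 1 * P12 (-1)
      + Ω k * Pe (-1) * P0 (-1) * P12 1 + Ω k * Pe (-1) * P0 (-1) * P12 (-1)) ∧
    (∀ ε s t : ℂ, (ε = 1 ∨ ε = -1) → (s = 1 ∨ s = -1) → (t = 1 ∨ t = -1) →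
      ∀ k, -(Dirac (fun k => Ω k * Pe ε * P0 s * P12 t) k * (e 1 * e 2)) =
        (-(ε * s * t) * (m : ℂ)) • ((Ω k * Pe ε * P0 s * P12 t) * e 0)) := by
  have sq_eq_one : ∀ c : ℂ, (c = 1 ∨ c = -1) → c ^ 2 = 1 := by
    rintro c (rfl | rfl) <;> norm_num
  refine ⟨fun k => ?_, fun ε s t hε hs ht k => ?_⟩
  · have hPe : Pe 1 + Pe (-1) = 1 := by
      simpa [Pe] using half_one_add_smul_add_half_one_add_neg_smul eV I
    have hP0 : P0 1 + P0 (-1) = 1 := half_one_add_smul_add_half_one_add_neg_smul (e 0) 1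
    have hP12 : P12 1 + P12 (-1) = 1 := by
      simpa [P12] using half_one_add_smul_add_half_one_add_neg_smul (e 1 * e 2) I
    calc Ω k = Ω k * (Pe 1 + Pe (-1)) * (P0 1 + P0 (-1)) * (P12 1 + P12 (-1)) := by
          rw [hPe, hP0, hP12, mul_one, mul_one, mul_one]
      _ = _ := by noncomm_ring
  · have hX : (fun k => Ω k * Pe ε * P0 s * P12 t) = fun k => Ω k * (Pe ε * P0 s * P12 t) := by
      simp only [mul_assoc]
    have hD : Dirac Ω k = -((m : ℂ) • (Ω k * eV)) := by rw [← hΩ k, neg_neg]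
    calc -(Dirac (fun k => Ω k * Pe ε * P0 s * P12 t) k * (e 1 * e 2))
        = (m : ℂ) • (Ω k * (eV * (Pe ε * P0 s * P12 t) * (e 1 * e 2))) := by
          rw [hX, Dirac_mul_right, hD]
          simp only [neg_mul, neg_neg, smul_mul_assoc, mul_assoc]
      _ = (-(ε * s * t) * (m : ℂ)) • (Ω k * Pe ε * P0 s * P12 t * e 0) := by
          rw [eV_mul_projectors_mul_e12 (sq_eq_one ε hε) (sq_eq_one s hs) (sq_eq_one t ht),
            mul_smul_comm, smul_smul, mul_comm (m : ℂ)]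
          simp only [mul_assoc]
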